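/- Assume in addition that inf_Θ g > 0 (so that log g is bounded). Let μ be an ergodic T-invariant probability measure on (Θ, 𝓑). Then μ(S_t) = 1 if t = γ(μ), and μ(S_t) = 0 for every t ≠ γ(μ). -/

import Mathlib

open MeasureTheory Filter Topology

/-- The general setting of the paper: a measurable base system with invertible
driving map `T`, a concave fibre function `h` (with its derivative `h'` on `[0,∞)`)
and a bounded measurable positive function `g`. -/
structure Setting (Θ : Type*) [MeasurableSpace Θ] where
  T : Θ → Θ
  Tinv : Θ → Θ
  left_inv : Function.LeftInverse Tinv T
  right_inv : Function.RightInverse Tinv T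
  T_meas : Measurable T
  Tinv_meas : Measurable Tinv
  h : ℝ → ℝ
  h' : ℝ → ℝ
  h_hasDeriv : ∀ x ∈ Set.Ici (0 : ℝ), HasDerivWithinAt h (h' x) (Set.Ici 0) x
  h'_cont : ContinuousOn h' (Set.Ici 0)
  h_strictConcave : StrictConcaveOn ℝ (Set.Ici 0) h
  h_zero : h 0 = 0
  h'_pos : ∀ x : ℝ, 0 < x → 0 < h' x
  h'_zero : h' 0 = 1
  h_sublinear : Tendsto (fun x => h x / x) atTop (𝓝 0)
  g : Θ → ℝ
  g_pos : ∀ θ, 0 < g θ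
  g_bdd : ∃ C : ℝ, ∀ θ, g θ ≤ C
  g_meas : Measurable g

namespace Setting

variable {Θ : Type*} [MeasurableSpace Θ]

/-- The fibre maps `f_t(θ,x) = e^{-t} g(θ) h(x)`. -/
noncomputable def f (S : Setting Θ) (t : ℝ) (θ : Θ) (x : ℝ) : ℝ :=
  Real.exp (-t) * S.g θ * S.h x

/-- The iterated fibre maps: `fn t 0 θ x = x` and
`fn t (n+1) θ x = f t (T^[n] θ) (fn t n θ x)`, so that `fn t 1 = f t`. -/
noncomputable def fn (S : Setting Θ) (t : ℝ) : ℕ → Θ → ℝ → ℝ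
  | 0, _, x => x
  | n + 1, θ, x => S.f t (S.T^[n] θ) (S.fn t n θ x)

/-- `ψ_{t,n}(θ) = f_t^n(T^{-n}θ, M)`. -/
noncomputable def ψ (S : Setting Θ) (t M : ℝ) (n : ℕ) (θ : Θ) : ℝ :=
  S.fn t n (S.Tinv^[n] θ) M

/-- The maximal invariant function `φ_t(θ) = inf_{n ≥ 1} ψ_{t,n}(θ)`. -/
noncomputable def φ (S : Setting Θ) (t M : ℝ) (θ : Θ) : ℝ :=
  ⨅ n : ℕ, S.ψ t M (n + 1) θ

/-- The zero set `N_t = {θ : φ_t(θ) = 0}`. -/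
noncomputable def Nset (S : Setting Θ) (t M : ℝ) : Set Θ := {θ | S.φ t M θ = 0}

/-- The critical parameter `t_c(θ) = inf {t : φ_t(θ) = 0}`. -/
noncomputable def tc (S : Setting Θ) (M : ℝ → ℝ) (θ : Θ) : ℝ :=
  sInf {t : ℝ | S.φ t (M t) θ = 0}

/-- The bifurcation set `S_t = {θ : t_c(θ) = t}`. -/
noncomputable def Sset (S : Setting Θ) (M : ℝ → ℝ) (t : ℝ) : Set Θ :=
  {θ | S.tc M θ = t}

/-- The Birkhoff average `Γ^{(n)}(θ) = (1/n) ∑_{k=1}^n log g(T^{-k}θ)`. -/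
noncomputable def Γn (S : Setting Θ) (n : ℕ) (θ : Θ) : ℝ :=
  (∑ k ∈ Finset.range n, Real.log (S.g (S.Tinv^[k + 1] θ))) / n

/-- The lower backwards Lyapunov average `Γ(θ) = liminf_n Γ^{(n)}(θ)`. -/
noncomputable def Γ (S : Setting Θ) (θ : Θ) : ℝ :=
  Filter.liminf (fun n : ℕ => S.Γn n θ) Filter.atTop

/-- The averaged exponent `γ(μ) = ∫ log g dμ`. -/
noncomputable def γfn (S : Setting Θ) (μ : Measure Θ) : ℝ :=
  ∫ θ, Real.log (S.g θ) ∂μ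

/-- The function `H(x) = log (h(x)/x)`. -/
noncomputable def Hfn (S : Setting Θ) (x : ℝ) : ℝ := Real.log (S.h x / x)

end Setting

/-!
Since `h x ≤ x`, each fibre map satisfies `f_t(θ, x) ≤ e^{log g(θ) - t} x`, hence
`ψ_{t,n}(θ) ≤ M e^{n (Γ^{(n)}(θ) - t)}` and `φ_t(θ) = 0` whenever `Γ(θ) < t`. Conversely, as
`h(x)/x → 1` at `0`, for every `η > 0` there is `δ > 0` with `h x ≥ e^{-η} min x δ`; when
`t + η < Γ(θ)` the backward Birkhoff sums of `log g - t - η` are bounded below, and this keeps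
every `ψ_{t,n}(θ)` above a positive constant. Hence `t_c = Γ` everywhere. Finally `T⁻¹` is ergodic
and `log g` is bounded, so Birkhoff's pointwise ergodic theorem, which follows from the maximal
ergodic inequality, gives `Γ = γ(μ)` almost everywhere.
-/

lemma limsup_add_eq_of_tendsto_zero {ι : Type*} {l : Filter ι} [l.NeBot] {u v : ι → ℝ}
    (hu₁ : IsBoundedUnder (· ≤ ·) l u) (hu₂ : IsBoundedUnder (· ≥ ·) l u)
    (hv : Tendsto v l (𝓝 0)) : limsup (u + v) l = limsup u l := by
  have hv₁ := hv.isBoundedUnder_le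
  have hv₂ := hv.isBoundedUnder_ge
  refine le_antisymm ?_ ?_
  · simpa [hv.limsup_eq] using limsup_add_le hu₂ hu₁ hv₂.isCoboundedUnder_le hv₁
  · simpa [hv.liminf_eq] using le_limsup_add hu₁ hu₂.isCoboundedUnder_le hv₁ hv₂

section MaximalErgodic

variable {α : Type*} {σ : α → α} {F : α → ℝ}

lemma partialSups_birkhoffSum_nonneg (n : ℕ) (x : α) :
    0 ≤ partialSups (birkhoffSum σ F) n x := by
  rw [Pi.partialSups_apply]
  exact le_trans (by simp) (le_partialSups_of_le (birkhoffSum σ F · x) (Nat.zero_le n))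

lemma partialSups_birkhoffSum_le_add {n : ℕ} {x : α}
    (hx : 0 < partialSups (birkhoffSum σ F) n x) :
    partialSups (birkhoffSum σ F) n x ≤ F x + partialSups (birkhoffSum σ F) n (σ x) := by
  have hle : partialSups (birkhoffSum σ F) n x
      ≤ max 0 (F x + partialSups (birkhoffSum σ F) n (σ x)) := by
    rw [Pi.partialSups_apply, partialSups_le_iff]
    rintro (_ | k) hk
    · simp
    · rw [birkhoffSum_succ', Pi.partialSups_apply]
      refine le_max_of_le_right ?_
      gcongr
      exact le_partialSups_of_le (birkhoffSum σ F · (σ x)) (by omega)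
  exact (le_max_iff.1 hle).resolve_left hx.not_ge

variable [MeasurableSpace α] {μ : Measure α}

lemma Measurable.birkhoffSum (hσ : Measurable σ) (hF : Measurable F) (n : ℕ) :
    Measurable (birkhoffSum σ F n) :=
  Finset.measurable_sum _ fun k _ => hF.comp (hσ.iterate k)

lemma MeasureTheory.MeasurePreserving.integrable_birkhoffSum (hσ : MeasurePreserving σ μ μ)
    (hF : Integrable F μ) (n : ℕ) : Integrable (birkhoffSum σ F n) μ :=
  integrable_finsetSum _ fun k _ => (hσ.iterate k).integrable_comp_of_integrable hF

theorem MeasureTheory.MeasurePreserving.maximal_ergodic_inequality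
    (hσ : MeasurePreserving σ μ μ) (hFm : Measurable F) (hF : Integrable F μ) :
    0 ≤ ∫ x in {x | ∃ n, 0 < birkhoffSum σ F n x}, F x ∂μ := by
  set M : ℕ → α → ℝ := fun n => partialSups (birkhoffSum σ F) n
  have hM_succ : ∀ n, M (n + 1) = M n ⊔ birkhoffSum σ F (n + 1) := fun n =>
    partialSups_succ (birkhoffSum σ F) n
  have hM_meas : ∀ n, Measurable (M n) := by
    intro n
    induction n with
    | zero => simpa [M] using hσ.measurable.birkhoffSum hFm 0
    | succ n ih => rw [hM_succ]; exact ih.sup (hσ.measurable.birkhoffSum hFm _)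
  have hM_int : ∀ n, Integrable (M n) μ := by
    intro n
    induction n with
    | zero => simp [M]
    | succ n ih => rw [hM_succ]; exact ih.sup (hσ.integrable_birkhoffSum hF _)
  have hA : ∀ n, MeasurableSet {x | 0 < M n x} := fun n =>
    measurableSet_lt measurable_const (hM_meas n)
  have hstep : ∀ n, 0 ≤ ∫ x in {x | 0 < M n x}, F x ∂μ := by
    intro n
    have hMσ : Integrable (fun x => M n (σ x)) μ :=
      hσ.integrable_comp_of_integrable (hM_int n)
    have hcomp : ∫ x, M n (σ x) ∂μ = ∫ x, M n x ∂μ := by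
      rw [← integral_map hσ.measurable.aemeasurable
        (hσ.map_eq ▸ (hM_meas n).aestronglyMeasurable), hσ.map_eq]
    calc (0 : ℝ) = ∫ x, M n x ∂μ - ∫ x, M n (σ x) ∂μ := by rw [hcomp, sub_self]
      _ ≤ ∫ x in {x | 0 < M n x}, M n x ∂μ - ∫ x in {x | 0 < M n x}, M n (σ x) ∂μ := by
          gcongr ?_ - ?_
          · exact (setIntegral_eq_integral_of_forall_compl_eq_zero fun x hx =>
              le_antisymm (not_lt.1 hx) (partialSups_birkhoffSum_nonneg n x)).ge
          · exact setIntegral_le_integral hMσ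
              (Eventually.of_forall fun x => partialSups_birkhoffSum_nonneg n (σ x))
      _ = ∫ x in {x | 0 < M n x}, (M n x - M n (σ x)) ∂μ :=
          (integral_sub (hM_int n).integrableOn hMσ.integrableOn).symm
      _ ≤ ∫ x in {x | 0 < M n x}, F x ∂μ :=
          setIntegral_mono_on ((hM_int n).sub hMσ).integrableOn hF.integrableOn (hA n)
            fun x hx => by linarith [partialSups_birkhoffSum_le_add (σ := σ) (F := F) hx]
  have hunion : ⋃ n, {x | 0 < M n x} = {x | ∃ n, 0 < birkhoffSum σ F n x} := by
    ext x
    simp only [Set.mem_iUnion, Set.mem_ofPred_eq, M, Pi.partialSups_apply]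
    constructor
    · rintro ⟨n, hn⟩
      by_contra! h
      exact hn.not_ge (partialSups_le_iff.2 fun k _ => h k)
    · rintro ⟨n, hn⟩
      exact ⟨n, hn.trans_le (le_partialSups (birkhoffSum σ F · x) n)⟩
  rw [← hunion]
  exact ge_of_tendsto (tendsto_setIntegral_of_monotone hA
    (fun m n hmn x hx => lt_of_lt_of_le hx ((partialSups (birkhoffSum σ F)).monotone hmn x))
    hF.integrableOn) (Eventually.of_forall hstep)

end MaximalErgodic

section BirkhoffErgodic

variable {α : Type*} {σ : α → α} {F : α → ℝ} {K : ℝ}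

lemma birkhoffSum_sub_const (d : ℝ) (n : ℕ) (x : α) :
    birkhoffSum σ (fun y => F y - d) n x = birkhoffSum σ F n x - n * d := by
  simp [birkhoffSum, Finset.sum_sub_distrib]

lemma abs_birkhoffAverage_le (hK : ∀ x, |F x| ≤ K) (n : ℕ) (x : α) :
    |birkhoffAverage ℝ σ F n x| ≤ K := by
  rcases n.eq_zero_or_pos with rfl | hn
  · simpa using (abs_nonneg _).trans (hK x)
  have hsum : |birkhoffSum σ F n x| ≤ n * K := by
    refine (Finset.abs_sum_le_sum_abs _ _).trans ?_
    simpa using Finset.sum_le_sum fun k (_ : k ∈ Finset.range n) => hK (σ^[k] x)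
  rw [birkhoffAverage, smul_eq_mul, abs_mul, abs_inv, Nat.abs_cast, inv_mul_le_iff₀ (by positivity)]
  exact hsum

lemma limsup_birkhoffAverage_apply (hK : ∀ x, |F x| ≤ K) (x : α) :
    limsup (fun n => birkhoffAverage ℝ σ F n (σ x)) atTop
      = limsup (fun n => birkhoffAverage ℝ σ F n x) atTop := by
  have hbdd : Bornology.IsBounded (Set.range F) := isBounded_iff_forall_norm_le.2
    ⟨K, Set.forall_mem_range.2 fun y => (Real.norm_eq_abs _).trans_le (hK y)⟩
  have := limsup_add_eq_of_tendsto_zero (u := fun n => birkhoffAverage ℝ σ F n x)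
    (isBoundedUnder_of ⟨K, fun n => (abs_le.1 (abs_birkhoffAverage_le hK n x)).2⟩)
    (isBoundedUnder_of ⟨-K, fun n => (abs_le.1 (abs_birkhoffAverage_le hK n x)).1⟩)
    (tendsto_birkhoffAverage_apply_sub_birkhoffAverage' ℝ hbdd σ x)
  simpa only [Pi.add_def, add_sub_cancel] using this

variable [MeasurableSpace α] {μ : Measure α} [IsProbabilityMeasure μ]

lemma Measurable.birkhoffAverage (hσ : Measurable σ) (hF : Measurable F) (n : ℕ) :
    Measurable (birkhoffAverage ℝ σ F n) :=
  (hσ.birkhoffSum hF n).const_smul ((n : ℝ)⁻¹)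

theorem Ergodic.ae_limsup_birkhoffAverage_le (hσ : Ergodic σ μ) (hFm : Measurable F)
    (hK : ∀ x, |F x| ≤ K) :
    ∀ᵐ x ∂μ, limsup (fun n => birkhoffAverage ℝ σ F n x) atTop ≤ ∫ x, F x ∂μ := by
  have hL : Measurable fun x => limsup (fun n => birkhoffAverage ℝ σ F n x) atTop :=
    Measurable.limsup fun n => hσ.measurable.birkhoffAverage hFm n
  obtain ⟨c, hc⟩ := hσ.ae_eq_const_of_ae_eq_comp₀ hL.nullMeasurable
    (Eventually.of_forall fun x => limsup_birkhoffAverage_apply hK x)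
  suffices hcF : c ≤ ∫ x, F x ∂μ by
    filter_upwards [hc] with x hx
    exact hx.trans_le hcF
  -- For `∫ F < d < c`, almost every orbit has a positive Birkhoff sum of `F - d`, so the
  -- maximal inequality would give `0 ≤ ∫ (F - d) = ∫ F - d`.
  by_contra! hlt
  obtain ⟨d, hFd, hdc⟩ := exists_between hlt
  have hF : Integrable F μ := (integrable_const K).mono' hFm.aestronglyMeasurable
    (Eventually.of_forall fun x => (Real.norm_eq_abs _).trans_le (hK x))
  have hFd_int : Integrable (fun y => F y - d) μ := hF.sub (integrable_const d)
  have hfull : ∀ᵐ x ∂μ, x ∈ {x | ∃ n, 0 < birkhoffSum σ (fun y => F y - d) n x} := by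
    filter_upwards [hc] with x hx
    have hfreq : ∃ᶠ n in atTop, d < birkhoffAverage ℝ σ F n x :=
      frequently_lt_of_lt_limsup (isBoundedUnder_of
        ⟨-K, fun n => (abs_le.1 (abs_birkhoffAverage_le hK n x)).1⟩).isCoboundedUnder_le
        (hx ▸ hdc)
    obtain ⟨n, hn, hn1⟩ := (hfreq.and_eventually (eventually_ge_atTop 1)).exists
    have hn0 : (0 : ℝ) < n := by exact_mod_cast hn1
    refine ⟨n, ?_⟩
    rw [birkhoffSum_sub_const, sub_pos]
    exact (lt_inv_mul_iff₀ hn0).1 (by simpa [birkhoffAverage] using hn)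
  have hmax := hσ.toMeasurePreserving.maximal_ergodic_inequality (F := fun y => F y - d)
    (hFm.sub measurable_const) hFd_int
  rw [Measure.restrict_eq_self_of_ae_mem hfull, integral_sub hF (integrable_const d)] at hmax
  simp only [integral_const, probReal_univ, smul_eq_mul, one_mul, sub_nonneg] at hmax
  linarith

theorem Ergodic.ae_tendsto_birkhoffAverage (hσ : Ergodic σ μ) (hFm : Measurable F)
    (hK : ∀ x, |F x| ≤ K) :
    ∀ᵐ x ∂μ, Tendsto (fun n => birkhoffAverage ℝ σ F n x) atTop (𝓝 (∫ x, F x ∂μ)) := by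
  filter_upwards [hσ.ae_limsup_birkhoffAverage_le hFm hK,
    hσ.ae_limsup_birkhoffAverage_le hFm.neg (F := -F) (by simpa using hK)] with x hup hlow
  have hbdd : ∀ G : α → ℝ, (∀ y, |G y| ≤ K) →
      IsBoundedUnder (· ≤ ·) atTop fun n => birkhoffAverage ℝ σ G n x := fun G hG =>
    isBoundedUnder_of ⟨K, fun n => (abs_le.1 (abs_birkhoffAverage_le hG n x)).2⟩
  refine tendsto_order.2 ⟨fun a ha => ?_, fun a ha => ?_⟩
  · simp only [Pi.neg_apply, integral_neg] at hlow
    filter_upwards [eventually_lt_of_limsup_lt (hlow.trans_lt (neg_lt_neg ha))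
      (hbdd (-F) (by simpa using hK))] with n hn
    simpa [birkhoffAverage_neg] using hn
  · exact eventually_lt_of_limsup_lt (hup.trans_lt ha) (hbdd F hK)

end BirkhoffErgodic

namespace Setting

variable {Θ : Type*} [MeasurableSpace Θ] (S : Setting Θ)

lemma h_strictMonoOn : StrictMonoOn S.h (Set.Ici 0) := by
  intro x hx y hy hxy
  have hslope := S.h_strictConcave.concaveOn.le_slope_of_hasDerivWithinAt hx hy hxy
    (S.h_hasDeriv y hy)
  rw [slope_def_field] at hslope
  have := div_pos_iff_of_pos_right (sub_pos.2 hxy) |>.1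
    ((S.h'_pos y (lt_of_le_of_lt hx hxy)).trans_le hslope)
  linarith

lemma h_nonneg {x : ℝ} (hx : 0 ≤ x) : 0 ≤ S.h x :=
  S.h_zero ▸ S.h_strictMonoOn.monotoneOn Set.self_mem_Ici hx hx

lemma h_le_self {x : ℝ} (hx : 0 ≤ x) : S.h x ≤ x := by
  rcases hx.eq_or_lt with rfl | hx
  · rw [S.h_zero]
  have hslope := S.h_strictConcave.concaveOn.slope_le_of_hasDerivWithinAt Set.self_mem_Ici
    hx.le hx (S.h_hasDeriv 0 Set.self_mem_Ici)
  rwa [slope_def_field, S.h_zero, S.h'_zero, sub_zero, sub_zero, div_le_one hx] at hslope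

lemma exists_exp_neg_mul_min_le_h {η : ℝ} (hη : 0 < η) :
    ∃ δ > 0, ∀ x, 0 ≤ x → Real.exp (-η) * min x δ ≤ S.h x := by
  have hslope : Tendsto (slope S.h 0) (𝓝[>] 0) (𝓝 1) := by
    have := S.h_hasDeriv 0 Set.self_mem_Ici
    rwa [hasDerivWithinAt_iff_tendsto_slope, S.h'_zero, Set.Ici_sdiff_left] at this
  obtain ⟨δ, hδ, hδ0⟩ := ((hslope.eventually (lt_mem_nhds (Real.exp_lt_one_iff.2
    (neg_lt_zero.2 hη)))).and self_mem_nhdsWithin).exists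
  refine ⟨δ, hδ0, fun x hx => ?_⟩
  rcases le_total x δ with hxδ | hδx
  · rcases hx.eq_or_lt with rfl | hx
    · rw [min_eq_left hxδ, mul_zero, S.h_zero]
    have hanti := S.h_strictConcave.concaveOn.antitoneOn_slope_gt Set.self_mem_Ici
      ⟨hx.le, hx⟩ ⟨hδ0.le, hδ0⟩ hxδ
    simp only [slope_def_field, S.h_zero, sub_zero] at hanti hδ
    rw [min_eq_left hxδ, ← le_div_iff₀ hx]
    linarith
  · rw [slope_def_field, S.h_zero, sub_zero, sub_zero, lt_div_iff₀ hδ0] at hδ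
    rw [min_eq_right hδx]
    exact hδ.le.trans (S.h_strictMonoOn.monotoneOn hδ0.le (hδ0.le.trans hδx) hδx)

variable {t x : ℝ}

lemma f_nonneg (θ : Θ) (hx : 0 ≤ x) : 0 ≤ S.f t θ x :=
  mul_nonneg (mul_pos (Real.exp_pos _) (S.g_pos θ)).le (S.h_nonneg hx)

lemma f_eq_exp_mul (θ : Θ) : S.f t θ x = Real.exp (Real.log (S.g θ) - t) * S.h x := by
  rw [f, Real.exp_sub, Real.exp_log (S.g_pos θ), Real.exp_neg]
  ring

lemma f_le_exp_mul (θ : Θ) (hx : 0 ≤ x) :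
    S.f t θ x ≤ Real.exp (Real.log (S.g θ) - t) * x := by
  rw [f_eq_exp_mul]
  gcongr
  exact S.h_le_self hx

lemma exp_mul_min_le_f {η δ : ℝ} (hδ : ∀ x, 0 ≤ x → Real.exp (-η) * min x δ ≤ S.h x)
    (θ : Θ) (hx : 0 ≤ x) :
    Real.exp (Real.log (S.g θ) - t - η) * min x δ ≤ S.f t θ x := by
  rw [f_eq_exp_mul, sub_eq_add_neg _ η, Real.exp_add, mul_assoc]
  gcongr
  exact hδ x hx

lemma ψ_succ (M : ℝ) (n : ℕ) (θ : Θ) :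
    S.ψ t M (n + 1) θ = S.f t (S.Tinv θ) (S.ψ t M n (S.Tinv θ)) := by
  rw [ψ, fn, Function.iterate_succ_apply, S.right_inv.iterate n, ψ]

lemma ψ_nonneg {M : ℝ} (hM : 0 ≤ M) (n : ℕ) (θ : Θ) : 0 ≤ S.ψ t M n θ := by
  induction n generalizing θ with
  | zero => exact hM
  | succ n ih => rw [ψ_succ]; exact S.f_nonneg _ (ih _)

lemma ψ_le_exp_birkhoffSum_mul {a : Θ → ℝ} (ha : ∀ θ y, 0 ≤ y → S.f t θ y ≤ Real.exp (a θ) * y)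
    {M : ℝ} (hM : 0 ≤ M) (n : ℕ) (θ : Θ) :
    S.ψ t M n θ ≤ Real.exp (birkhoffSum S.Tinv a n (S.Tinv θ)) * M := by
  induction n generalizing θ with
  | zero => simp [ψ, fn]
  | succ n ih =>
    rw [ψ_succ, birkhoffSum_succ', Real.exp_add, mul_assoc]
    exact (ha _ _ (S.ψ_nonneg hM n _)).trans
      (mul_le_mul_of_nonneg_left (ih _) (Real.exp_pos _).le)

lemma exp_mul_min_le_ψ {b : Θ → ℝ} {δ : ℝ}
    (hb : ∀ θ y, 0 ≤ y → Real.exp (b θ) * min y δ ≤ S.f t θ y) (hδ : 0 ≤ δ)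
    {M : ℝ} (hM : 0 ≤ M) (n : ℕ) (θ : Θ) {L : ℝ}
    (hL : ∀ j ≤ n, L ≤ birkhoffSum S.Tinv b j (S.Tinv θ)) :
    Real.exp L * min M δ ≤ S.ψ t M n θ := by
  induction n generalizing θ L with
  | zero =>
    have hL0 : Real.exp L ≤ 1 := Real.exp_le_one_iff.2 (by simpa using hL 0 le_rfl)
    calc Real.exp L * min M δ ≤ 1 * M :=
          mul_le_mul hL0 (min_le_left M δ) (le_min hM hδ) zero_le_one
      _ = S.ψ t M 0 θ := one_mul M
  | succ n ih =>
    set θ₁ := S.Tinv θ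
    have hb₁ : L ≤ b θ₁ := by simpa using hL 1 (by omega)
    have hz := ih θ₁ (L := L - b θ₁) fun j hj => by
      have := hL (j + 1) (by omega)
      rw [birkhoffSum_succ'] at this
      linarith
    rw [ψ_succ]
    refine le_trans ?_ (hb θ₁ _ (S.ψ_nonneg hM n θ₁))
    rw [mul_min_of_nonneg _ _ (Real.exp_pos (b θ₁)).le]
    refine le_min ?_ ?_
    · calc Real.exp L * min M δ = Real.exp (b θ₁) * (Real.exp (L - b θ₁) * min M δ) := by
            rw [← mul_assoc, ← Real.exp_add, add_sub_cancel]
        _ ≤ Real.exp (b θ₁) * S.ψ t M n θ₁ := by gcongr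
    · exact mul_le_mul (Real.exp_le_exp.2 hb₁) (min_le_right M δ) (le_min hM hδ)
        (Real.exp_pos _).le

variable {K : ℝ}

lemma exists_abs_log_g_le (hg : ∃ c : ℝ, 0 < c ∧ ∀ θ, c ≤ S.g θ) :
    ∃ K, ∀ θ, |Real.log (S.g θ)| ≤ K := by
  obtain ⟨c, hc, hcg⟩ := hg
  obtain ⟨C, hC⟩ := S.g_bdd
  refine ⟨max (-Real.log c) (Real.log C), fun θ => abs_le.2 ⟨?_, ?_⟩⟩
  · have := Real.log_le_log hc (hcg θ)
    linarith [le_max_left (-Real.log c) (Real.log C)]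
  · exact (Real.log_le_log (S.g_pos θ) (hC θ)).trans (le_max_right _ _)

lemma Γn_eq_birkhoffAverage (n : ℕ) (θ : Θ) :
    S.Γn n θ = birkhoffAverage ℝ S.Tinv (fun θ => Real.log (S.g θ)) n (S.Tinv θ) := by
  simp only [Γn, birkhoffAverage, birkhoffSum, Function.iterate_succ_apply, smul_eq_mul,
    div_eq_inv_mul]

lemma birkhoffSum_log_g_sub (s : ℝ) (n : ℕ) (θ : Θ) :
    birkhoffSum S.Tinv (fun θ => Real.log (S.g θ) - s) n (S.Tinv θ) = n * (S.Γn n θ - s) := by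
  rw [birkhoffSum_sub_const, Γn_eq_birkhoffAverage, birkhoffAverage, smul_eq_mul]
  rcases n.eq_zero_or_pos with rfl | hn
  · simp
  · field_simp

lemma abs_Γn_le (hK : ∀ θ, |Real.log (S.g θ)| ≤ K) (n : ℕ) (θ : Θ) : |S.Γn n θ| ≤ K := by
  rw [Γn_eq_birkhoffAverage]
  exact abs_birkhoffAverage_le hK n _

variable {M : ℝ}

lemma φ_nonneg (hM : 0 ≤ M) (θ : Θ) : 0 ≤ S.φ t M θ :=
  le_ciInf fun n => S.ψ_nonneg hM (n + 1) θ

lemma φ_le_ψ (hM : 0 ≤ M) (n : ℕ) (θ : Θ) : S.φ t M θ ≤ S.ψ t M (n + 1) θ :=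
  ciInf_le ⟨0, Set.forall_mem_range.2 fun n => S.ψ_nonneg hM (n + 1) θ⟩ n

lemma φ_eq_zero_of_Γ_lt (hK : ∀ θ, |Real.log (S.g θ)| ≤ K) (hM : 0 ≤ M) {θ : Θ}
    (hΓ : S.Γ θ < t) : S.φ t M θ = 0 := by
  obtain ⟨s, hΓs, hst⟩ := exists_between hΓ
  have hfreq : ∃ᶠ n in atTop, S.Γn n θ < s :=
    frequently_lt_of_liminf_lt (isBoundedUnder_of
      ⟨K, fun n => (abs_le.1 (S.abs_Γn_le hK n θ)).2⟩).isCoboundedUnder_ge hΓs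
  have hsmall : ∃ᶠ n in atTop, S.φ t M θ ≤ M * Real.exp (s - t) ^ n := by
    refine (hfreq.and_eventually (eventually_ge_atTop 1)).mono fun n ⟨hn, hn1⟩ => ?_
    obtain ⟨m, rfl⟩ := Nat.exists_eq_add_of_le' hn1
    calc S.φ t M θ ≤ S.ψ t M (m + 1) θ := S.φ_le_ψ hM m θ
      _ ≤ Real.exp (birkhoffSum S.Tinv (fun θ => Real.log (S.g θ) - t) (m + 1) (S.Tinv θ)) * M :=
          S.ψ_le_exp_birkhoffSum_mul (fun θ _ hy => S.f_le_exp_mul θ hy) hM _ θ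
      _ ≤ M * Real.exp (s - t) ^ (m + 1) := by
          rw [S.birkhoffSum_log_g_sub, ← Real.exp_nat_mul, mul_comm]
          gcongr
  have hlim : Tendsto (fun n : ℕ => M * Real.exp (s - t) ^ n) atTop (𝓝 0) := by
    simpa using (tendsto_pow_atTop_nhds_zero_of_lt_one (Real.exp_pos _).le
      (Real.exp_lt_one_iff.2 (sub_neg.2 hst))).const_mul M
  exact le_antisymm (ge_of_tendsto_of_frequently hlim hsmall) (S.φ_nonneg hM θ)

lemma φ_pos_of_lt_Γ (hK : ∀ θ, |Real.log (S.g θ)| ≤ K) (hM : 0 < M) {θ : Θ}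
    (hΓ : t < S.Γ θ) : 0 < S.φ t M θ := by
  obtain ⟨η, hη, hηΓ⟩ : ∃ η, 0 < η ∧ t + η < S.Γ θ :=
    ⟨(S.Γ θ - t) / 2, by linarith, by linarith⟩
  obtain ⟨δ, hδ0, hδ⟩ := S.exists_exp_neg_mul_min_le_h hη
  set b : Θ → ℝ := fun θ => Real.log (S.g θ) - (t + η)
  have hb : ∀ θ y, 0 ≤ y → Real.exp (b θ) * min y δ ≤ S.f t θ y := fun θ y hy => by
    simpa only [b, sub_add_eq_sub_sub] using S.exp_mul_min_le_f hδ θ hy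
  have hev : ∀ᶠ n in atTop, 0 ≤ birkhoffSum S.Tinv b n (S.Tinv θ) := by
    filter_upwards [eventually_lt_of_lt_liminf hηΓ
      (isBoundedUnder_of ⟨-K, fun n => (abs_le.1 (S.abs_Γn_le hK n θ)).1⟩)] with n hn
    rw [S.birkhoffSum_log_g_sub]
    exact mul_nonneg n.cast_nonneg (sub_nonneg.2 hn.le)
  obtain ⟨C, hC⟩ := (isBoundedUnder_of_eventually_ge hev).bddBelow_range
  have hlow : ∀ n, Real.exp C * min M δ ≤ S.ψ t M (n + 1) θ := fun n =>
    S.exp_mul_min_le_ψ hb hδ0.le hM.le (n + 1) θ fun j _ => hC ⟨j, rfl⟩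
  exact lt_of_lt_of_le (by positivity) (le_ciInf hlow)

lemma tc_eq_Γ (hK : ∀ θ, |Real.log (S.g θ)| ≤ K) {M : ℝ → ℝ} (hM : ∀ t, 0 < M t) (θ : Θ) :
    S.tc M θ = S.Γ θ := by
  have hsub : Set.Ioi (S.Γ θ) ⊆ {t | S.φ t (M t) θ = 0} := fun t ht =>
    S.φ_eq_zero_of_Γ_lt hK (hM t).le ht
  have hlb : {t | S.φ t (M t) θ = 0} ⊆ Set.Ici (S.Γ θ) := fun t ht =>
    not_lt.1 fun hlt => (S.φ_pos_of_lt_Γ hK (hM t) hlt).ne' ht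
  refine le_antisymm ?_ (le_csInf (Set.nonempty_Ioi.mono hsub) hlb)
  calc S.tc M θ ≤ sInf (Set.Ioi (S.Γ θ)) := csInf_le_csInf ⟨S.Γ θ, hlb⟩ Set.nonempty_Ioi hsub
    _ = S.Γ θ := csInf_Ioi

def toMeasurableEquiv : Θ ≃ᵐ Θ where
  toFun := S.T
  invFun := S.Tinv
  left_inv := S.left_inv
  right_inv := S.right_inv
  measurable_toFun := S.T_meas
  measurable_invFun := S.Tinv_meas

lemma ae_Γ_eq_γfn (hK : ∀ θ, |Real.log (S.g θ)| ≤ K) {μ : Measure Θ} [IsProbabilityMeasure μ]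
    (hμ : Ergodic S.T μ) : ∀ᵐ θ ∂μ, S.Γ θ = S.γfn μ := by
  have hμ' : Ergodic S.Tinv μ := Ergodic.symm (e := S.toMeasurableEquiv) hμ
  have hconv := hμ'.ae_tendsto_birkhoffAverage (Real.measurable_log.comp S.g_meas) hK
  filter_upwards [hμ'.toMeasurePreserving.quasiMeasurePreserving.ae hconv] with θ hθ
  simp only [Γ, Γn_eq_birkhoffAverage]
  exact hθ.liminf_eq

end Setting

theorem stmt13_general {Θ : Type*} [MeasurableSpace Θ] (S : Setting Θ)
    (hg : ∃ c : ℝ, 0 < c ∧ ∀ θ, c ≤ S.g θ)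
    (M : ℝ → ℝ) (hM : ∀ t, 0 < M t)
    (μ : Measure Θ) [IsProbabilityMeasure μ] (hμ : Ergodic S.T μ) :
    μ (S.Sset M (S.γfn μ)) = 1 ∧ ∀ t : ℝ, t ≠ S.γfn μ → μ (S.Sset M t) = 0 := by
  obtain ⟨K, hK⟩ := S.exists_abs_log_g_le hg
  have htc : S.tc M = S.Γ := funext (S.tc_eq_Γ hK hM)
  have hSset : ∀ t, S.Sset M t = {θ | S.Γ θ = t} := fun t => by rw [Setting.Sset, htc]
  have hΓ : μ {θ | S.Γ θ ≠ S.γfn μ} = 0 := ae_iff.1 (S.ae_Γ_eq_γfn hK hμ)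
  refine ⟨?_, fun t ht => ?_⟩
  · rw [hSset, ← measure_univ (μ := μ)]
    exact measure_congr (ae_eq_univ.2 hΓ)
  · rw [hSset]
    exact measure_mono_null (fun θ (hθ : S.Γ θ = t) hγ => ht (hθ ▸ hγ)) hΓ

/-- assuming `inf g > 0`, for an ergodic `T`-invariant probability measure
`μ` one has `μ(S_t) = 1` for `t = γ(μ)`, and `μ(S_t) = 0` for every `t ≠ γ(μ)`. -/
theorem stmt13 {Θ : Type*} [MeasurableSpace Θ] (S : Setting Θ)
    (hg : ∃ c : ℝ, 0 < c ∧ ∀ θ, c ≤ S.g θ)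
    (M : ℝ → ℝ) (hM : ∀ t, 0 < M t) (hMf : ∀ t θ, S.f t θ (M t) < M t)
    (μ : Measure Θ) [IsProbabilityMeasure μ] (hμ : Ergodic S.T μ) :
    μ (S.Sset M (S.γfn μ)) = 1 ∧ ∀ t : ℝ, t ≠ S.γfn μ → μ (S.Sset M t) = 0 :=
  stmt13_general S hg M hM μ hμ
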